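/- The within-layer H-DP co-clustering probability formula sums correctly: the expression (1/((θ+V_j−2)(θ+V_j−1))) · [ ∑_h n_{jh}(n_{jh}+1) + θ(1 + (2/(θ₀+|ℓ|))∑_h n_{jh}ℓ_{·h}) + (θ²/((θ₀+|ℓ|)(θ₀+|ℓ|+1)))(∑_h ℓ_{·h}(ℓ_{·h}+1) + θ₀) ] lies in [0,1], given ∑_h n_{jh} = V_j − 2, ∑_h ℓ_{·h} = |ℓ|, and the per-profile constraints n_{jh} ≥ 0, ℓ_{·h} ≥ 1. -/
import Mathlib
set_option maxHeartbeats 800000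


open Finset

lemma sum_mul_le_sum_mul_sum {ι : Type*} (s : Finset ι) (f g : ι → ℝ)
    (hf : ∀ i ∈ s, 0 ≤ f i) (hg : ∀ i ∈ s, 0 ≤ g i) :
    ∑ i ∈ s, f i * g i ≤ (∑ i ∈ s, f i) * (∑ i ∈ s, g i) := by
  calc ∑ i ∈ s, f i * g i ≤ ∑ i ∈ s, f i * (∑ j ∈ s, g j) := by
        refine Finset.sum_le_sum fun i hi => ?_
        exact mul_le_mul_of_nonneg_left (Finset.single_le_sum hg hi) (hf i hi)
    _ = (∑ i ∈ s, f i) * (∑ i ∈ s, g i) := by rw [← Finset.sum_mul]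

/-- The within-layer H-DP co-clustering probability expression lies in `[0,1]`. -/
theorem hdp_coclustering_within_layer_in_unit_interval (θ θ₀ : ℝ)
    (hθ : 0 < θ) (hθ₀ : 0 < θ₀) (H : ℕ) (hH : 1 ≤ H) (Vj : ℕ) (hVj : 2 ≤ Vj)
    (n : Fin H → ℕ) (hn : ∑ h, n h = Vj - 2)
    (ℓ : Fin H → ℕ) (hℓ : ∀ h, 1 ≤ ℓ h) (L : ℕ) (hL : ∑ h, ℓ h = L) :
    0 ≤ (1 / ((θ + (Vj : ℝ) - 2) * (θ + (Vj : ℝ) - 1)))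
          * ((∑ h, (n h : ℝ) * ((n h : ℝ) + 1))
            + θ * (1 + 2 / (θ₀ + L) * ∑ h, (n h : ℝ) * (ℓ h : ℝ))
            + θ ^ 2 / ((θ₀ + L) * (θ₀ + L + 1))
                * ((∑ h, (ℓ h : ℝ) * ((ℓ h : ℝ) + 1)) + θ₀)) ∧
    (1 / ((θ + (Vj : ℝ) - 2) * (θ + (Vj : ℝ) - 1)))
          * ((∑ h, (n h : ℝ) * ((n h : ℝ) + 1))
            + θ * (1 + 2 / (θ₀ + L) * ∑ h, (n h : ℝ) * (ℓ h : ℝ))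
            + θ ^ 2 / ((θ₀ + L) * (θ₀ + L + 1))
                * ((∑ h, (ℓ h : ℝ) * ((ℓ h : ℝ) + 1)) + θ₀)) ≤ 1 := by
  set sN : ℝ := ∑ h, (n h : ℝ) with hsN
  set sL : ℝ := ∑ h, (ℓ h : ℝ) with hsL
  set S1 : ℝ := ∑ h, (n h : ℝ) * ((n h : ℝ) + 1) with hS1
  set S2 : ℝ := ∑ h, (ℓ h : ℝ) * ((ℓ h : ℝ) + 1) with hS2
  set P : ℝ := ∑ h, (n h : ℝ) * (ℓ h : ℝ) with hP
  have hsNval : sN = (Vj : ℝ) - 2 := by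
    rw [hsN, ← Nat.cast_sum, hn]
    have : ((Vj - 2 : ℕ) : ℝ) = (Vj : ℝ) - 2 := by
      rw [Nat.cast_sub hVj]; norm_num
    exact this
  have hsLval : sL = (L : ℝ) := by rw [hsL, ← Nat.cast_sum, hL]
  have hsN0 : 0 ≤ sN := Finset.sum_nonneg fun i _ => Nat.cast_nonneg _
  have hL0 : (0 : ℝ) ≤ L := Nat.cast_nonneg _
  have hS10 : 0 ≤ S1 := Finset.sum_nonneg fun i _ => by positivity
  have hS20 : 0 ≤ S2 := Finset.sum_nonneg fun i _ => by positivity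
  have hP0 : 0 ≤ P := Finset.sum_nonneg fun i _ => by positivity
  have hA : 0 < θ + (Vj : ℝ) - 2 := by
    have : (2 : ℝ) ≤ (Vj : ℝ) := by exact_mod_cast hVj
    linarith
  have hA1 : 0 < θ + (Vj : ℝ) - 1 := by linarith
  have hD : 0 < θ₀ + (L : ℝ) := by linarith
  have hD1 : 0 < θ₀ + (L : ℝ) + 1 := by linarith
  -- key sum bounds
  have hPle : P ≤ sN * sL := by
    apply sum_mul_le_sum_mul_sum
    · intro i _; positivity
    · intro i _; positivity
  have hS1le : S1 ≤ sN * (sN + 1) := by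
    have h1 : (∑ h, (n h : ℝ) * (n h : ℝ)) ≤ sN * sN := by
      apply sum_mul_le_sum_mul_sum
      · intro i _; positivity
      · intro i _; positivity
    have h2 : S1 = (∑ h, (n h : ℝ) * (n h : ℝ)) + sN := by
      rw [hS1, hsN, ← Finset.sum_add_distrib]
      apply Finset.sum_congr rfl; intro i _; ring
    nlinarith
  have hS2le : S2 ≤ sL * (sL + 1) := by
    have h1 : (∑ h, (ℓ h : ℝ) * (ℓ h : ℝ)) ≤ sL * sL := by
      apply sum_mul_le_sum_mul_sum
      · intro i _; positivity
      · intro i _; positivity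
    have h2 : S2 = (∑ h, (ℓ h : ℝ) * (ℓ h : ℝ)) + sL := by
      rw [hS2, hsL, ← Finset.sum_add_distrib]
      apply Finset.sum_congr rfl; intro i _; ring
    nlinarith
  -- bounds on the division pieces
  have t1 : 2 / (θ₀ + (L : ℝ)) * P ≤ 2 * sN := by
    rw [div_mul_eq_mul_div, div_le_iff₀ hD]
    have h1 : P ≤ sN * (L : ℝ) := by rw [← hsLval]; exact hPle
    nlinarith [mul_nonneg hsN0 hθ₀.le]
  have t10 : 0 ≤ 2 / (θ₀ + (L : ℝ)) * P := by positivity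
  have t2 : θ ^ 2 / ((θ₀ + (L : ℝ)) * (θ₀ + (L : ℝ) + 1)) * (S2 + θ₀) ≤ θ ^ 2 := by
    rw [div_mul_eq_mul_div, div_le_iff₀ (by positivity)]
    have hb : S2 + θ₀ ≤ (θ₀ + (L : ℝ)) * (θ₀ + (L : ℝ) + 1) := by
      have h2 : S2 ≤ (L : ℝ) * ((L : ℝ) + 1) := by rw [← hsLval]; exact hS2le
      nlinarith [mul_nonneg hθ₀.le hL0, sq_nonneg θ₀]
    nlinarith [sq_nonneg θ, mul_le_mul_of_nonneg_left hb (sq_nonneg θ)]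
  have t20 : 0 ≤ θ ^ 2 / ((θ₀ + (L : ℝ)) * (θ₀ + (L : ℝ) + 1)) * (S2 + θ₀) := by positivity
  have hXnn : 0 ≤ S1 + θ * (1 + 2 / (θ₀ + (L : ℝ)) * P)
      + θ ^ 2 / ((θ₀ + (L : ℝ)) * (θ₀ + (L : ℝ) + 1)) * (S2 + θ₀) := by
    nlinarith [hθ.le]
  have hXle : S1 + θ * (1 + 2 / (θ₀ + (L : ℝ)) * P)
      + θ ^ 2 / ((θ₀ + (L : ℝ)) * (θ₀ + (L : ℝ) + 1)) * (S2 + θ₀)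
      ≤ (θ + (Vj : ℝ) - 2) * (θ + (Vj : ℝ) - 1) := by
    have h1 : S1 ≤ ((Vj:ℝ) - 2) * (((Vj:ℝ) - 2) + 1) := by rw [← hsNval]; exact hS1le
    have t1' : 2 / (θ₀ + (L:ℝ)) * P ≤ 2 * ((Vj:ℝ) - 2) := by rw [← hsNval]; exact t1
    nlinarith [hθ.le, t2, t10, t20]
  constructor
  · positivity
  · rw [one_div_mul_eq_div, div_le_one (by positivity)]
    exact hXle
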